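/- For a nonempty set X, the number of atoms of the C-algebra 𝟛^X equals 2·|X|. -/

import Mathlib

/-- The three truth values of McCarthy's three-valued logic. -/
inductive Three : Type
  | T | F | U
deriving DecidableEq

open Three

/-- Negation in `𝟛`. -/
def tneg : Three → Three
  | T => F
  | F => T
  | U => U

/-- McCarthy's left-sequential conjunction. -/
def tand : Three → Three → Three
  | T, x => x
  | F, _ => F
  | U, _ => U

/-- McCarthy's left-sequential disjunction. -/
def tor : Three → Three → Three
  | T, _ => T
  | F, x => x
  | U, _ => U

/-- Pointwise disjunction on `𝟛^X`. -/
def fOr {X : Type*} (α β : X → Three) : X → Three := fun x => tor (α x) (β x)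

/-- Pointwise conjunction on `𝟛^X`. -/
def fAnd {X : Type*} (α β : X → Three) : X → Three := fun x => tand (α x) (β x)

/-- Pointwise negation on `𝟛^X`. -/
def fNeg {X : Type*} (α : X → Three) : X → Three := fun x => tneg (α x)

/-- The constant function `F`, the bottom element of `𝟛^X`. -/
def bF {X : Type*} : X → Three := fun _ => F

/-- The order on `𝟛^X`: `α ≤ β` iff `α ∨ β = β`. -/
def fLe {X : Type*} (α β : X → Three) : Prop := fOr α β = β

/-- `α` is an atom of `𝟛^X`: `α ≠ F` and any `b` with `F ≤ b ≤ α`, `b ≠ α` is `F`. -/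
def IsAtom3 {X : Type*} (α : X → Three) : Prop :=
  α ≠ bF ∧ ∀ β : X → Three, fLe bF β → fLe β α → β ≠ α → β = bF

/-
An atom of `𝟛^X` is nonzero, so it takes a value `v ≠ F` at some `x₀`; the function that is
`v` at `x₀` and `F` elsewhere lies below it and is nonzero, hence equals it. Conversely every
such function is an atom, since anything below it is `F` off `x₀` and `F` or `v` at `x₀`.
So the atoms are parametrised by `{T, U} × X`.
-/

open Classical in
noncomputable def single {X : Type*} (x₀ : X) (v : Three) : X → Three :=
  fun x => if x = x₀ then v else F

section Single

variable {X : Type*} {x₀ : X} {v : Three}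

@[simp]
lemma single_apply_self : single x₀ v x₀ = v := if_pos rfl

lemma single_apply_of_ne {x : X} (hx : x ≠ x₀) : single x₀ v x = F := if_neg hx

lemma single_ne_bF (hv : v ≠ F) : single x₀ v ≠ bF := fun h => hv (single_apply_self.symm.trans (congrFun h x₀))

lemma eq_and_eq_of_single_eq_single {x y : X} {w : Three} (hv : v ≠ F)
    (h : single x v = single y w) : x = y ∧ v = w := by
  have hx := congrFun h x
  rw [single_apply_self] at hx
  by_cases hxy : x = y
  · subst hxy
    exact ⟨rfl, hx.trans single_apply_self⟩
  · exact absurd (hx.trans (single_apply_of_ne hxy)) hv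

end Single

lemma tor_eq_right_iff (b a : Three) : tor b a = a ↔ b = F ∨ b = a := by
  cases b <;> cases a <;> decide

lemma fLe_iff {X : Type*} {β α : X → Three} : fLe β α ↔ ∀ x, β x = F ∨ β x = α x := by
  simp only [fLe, funext_iff, fOr, tor_eq_right_iff]

lemma fLe_bF_left {X : Type*} (β : X → Three) : fLe bF β := fLe_iff.2 fun _ => Or.inl rfl

lemma eq_bF_or_eq_single_of_fLe {X : Type*} {β : X → Three} {x₀ : X} {v : Three}
    (h : fLe β (single x₀ v)) : β = bF ∨ β = single x₀ v := by
  have hoff : ∀ x, x ≠ x₀ → β x = F := fun x hx => by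
    simpa [single_apply_of_ne hx] using fLe_iff.1 h x
  rcases fLe_iff.1 h x₀ with h₀ | h₀
  · left
    funext x
    by_cases hx : x = x₀
    · subst hx; exact h₀
    · exact hoff x hx
  · right
    funext x
    by_cases hx : x = x₀
    · subst hx; exact h₀
    · rw [hoff x hx, single_apply_of_ne hx]

lemma isAtom3_single {X : Type*} (x₀ : X) {v : Three} (hv : v ≠ F) :
    IsAtom3 (single x₀ v) :=
  ⟨single_ne_bF hv, fun _ _ hle hne => (eq_bF_or_eq_single_of_fLe hle).resolve_right hne⟩

lemma IsAtom3.exists_eq_single {X : Type*} {α : X → Three} (h : IsAtom3 α) :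
    ∃ x₀, α x₀ ≠ F ∧ α = single x₀ (α x₀) := by
  obtain ⟨hne, hmin⟩ := h
  obtain ⟨x₀, hx₀⟩ : ∃ x₀, α x₀ ≠ F := by
    by_contra! hc
    exact hne (funext hc)
  refine ⟨x₀, hx₀, ?_⟩
  have hle : fLe (single x₀ (α x₀)) α := fLe_iff.2 fun x => by
    by_cases hx : x = x₀
    · subst hx; exact Or.inr single_apply_self
    · exact Or.inl (single_apply_of_ne hx)
  by_contra hne'
  exact single_ne_bF hx₀ (hmin _ (fLe_bF_left _) hle (Ne.symm hne'))

noncomputable def atomEquiv (X : Type*) :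
    {v : Three // v ≠ F} × X ≃ {α : X → Three // IsAtom3 α} :=
  Equiv.ofBijective (fun p => ⟨single p.2 p.1, isAtom3_single p.2 p.1.2⟩) <| by
    refine ⟨fun p q h => ?_, fun ⟨α, hα⟩ => ?_⟩
    · obtain ⟨hx, hv⟩ := eq_and_eq_of_single_eq_single p.1.2 (congrArg Subtype.val h)
      exact Prod.ext (Subtype.ext hv) hx
    · obtain ⟨x₀, hx₀, hα_eq⟩ := hα.exists_eq_single
      exact ⟨(⟨α x₀, hx₀⟩, x₀), Subtype.ext hα_eq.symm⟩

instance : Fintype Three := ⟨{T, F, U}, fun v => by cases v <;> decide⟩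

lemma mk_subtype_ne_F : Cardinal.mk {v : Three // v ≠ F} = 2 := by
  rw [Cardinal.mk_fintype]
  rfl

theorem stmt10_general {X : Type*} :
    Cardinal.mk {α : X → Three // IsAtom3 α} = 2 * Cardinal.mk X := by
  rw [← Cardinal.mk_congr (atomEquiv X), Cardinal.mk_prod, mk_subtype_ne_F,
    Cardinal.lift_ofNat, Cardinal.lift_uzero]

/-- For nonempty `X`, the number of atoms of `𝟛^X` is `2 ⬝ |X|`. -/
theorem stmt10 {X : Type*} [Nonempty X] :
    Cardinal.mk {α : X → Three // IsAtom3 α} = 2 * Cardinal.mk X :=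
  stmt10_general
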